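/- For every maxmin copula C and all x,y ∈ [0,1] one has |C(x,y) − C(y,x)| ≤ 4/27, and this bound is sharp over the class of maxmin copulas. Moreover, for every (x,y) ∈ [0,1]² with x ≤ y, the supremum of the set {|C(x,y) − C(y,x)| : C a maxmin copula} equals max{F(x,y), F(1−y, 1−x)}, where F(u,v) = u(1−v) if u ≤ v² and F(u,v) = u(v−u)/v if u > v² (for 0 ≤ u ≤ v ≤ 1); explicitly, this supremum equals (x/y)(y−x) if max{1−y, y²} ≤ x ≤ y, equals ((1−y)/(1−x))(y−x) if x ≤ y ≤ min{2x−x², 1−x}, and equals x(1−y) otherwise. For x ≥ y the supremum equals the value at (y,x). -/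

import Mathlib

/-- The class `𝓕` of generators: `f : [0,1] → [0,1]`, `f(0) = f(1) = 0`,
`x ↦ f(x) + x` nondecreasing on `[0,1]`, and `x ↦ f(x)/x` nonincreasing on `(0,1]`. -/
def MemF (f : ℝ → ℝ) : Prop :=
  (∀ x ∈ Set.Icc (0:ℝ) 1, f x ∈ Set.Icc (0:ℝ) 1) ∧
  f 0 = 0 ∧ f 1 = 0 ∧
  MonotoneOn (fun x => f x + x) (Set.Icc 0 1) ∧
  AntitoneOn (fun x => f x / x) (Set.Ioc 0 1)

/-- A maxmin copula: `C(x,y) = min{x, xy + f(x)g(1−y)}` on `[0,1]²` with `f, g ∈ 𝓕`. -/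
def IsMaxminCopula (C : ℝ → ℝ → ℝ) : Prop :=
  ∃ f g : ℝ → ℝ, MemF f ∧ MemF g ∧
    ∀ x ∈ Set.Icc (0:ℝ) 1, ∀ y ∈ Set.Icc (0:ℝ) 1,
      C x y = min x (x * y + f x * g (1 - y))

/-- The bound function `F` for Marshall copulas: `F(u,v) = u(1−v)` if `u ≤ v²`,
and `F(u,v) = u(v−u)/v` otherwise (on `0 ≤ u ≤ v ≤ 1`). -/
noncomputable def Fbound (u v : ℝ) : ℝ :=
  if u ≤ v ^ 2 then u * (1 - v) else u * (v - u) / v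

/-- The maximal asymmetry function of the family of maxmin copulas (for `x ≤ y`). -/
noncomputable def dstarMaxmin (x y : ℝ) : ℝ :=
  if max (1 - y) (y ^ 2) ≤ x then x / y * (y - x)
  else if y ≤ min (2 * x - x ^ 2) (1 - x) then (1 - y) / (1 - x) * (y - x)
  else x * (1 - y)

/-!
For `x ≤ y` write `a = f x`, `b = f y`, `c = g (1 - y)`, `d = g (1 - x)`. Then
`C(x,y) - C(y,x) = min (x (1 - y)) (a c) - b d`, and the constraints that `𝓕` puts on `(a, b)`
and on `(c, d)` are exchanged by the duality `(f, g, x, y) ↦ (g, f, 1 - y, 1 - x)`, which leaves this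
expression unchanged. The positive part is at most `F(x,y)` when `x + y ≥ 1` and, by duality, at
most `F(1-y,1-x)` when `x + y ≤ 1`; the negative part is at most `F(x,y)`, since multiplying the
two ratio constraints `b x ≤ a y`, `d (1 - y) ≤ c (1 - x)` gives `b d x (1 - y) ≤ a c y (1 - x)`.
Piecewise-linear generators `t ↦ max 0 (min (l t) (m - t))` attain `F(x,y)` and, dually,
`F(1-y,1-x)`. Finally `F ≤ 4/27`, with equality at `(4/9, 2/3)`.
-/

def tent (l m t : ℝ) : ℝ := max 0 (min (l * t) (m - t))

lemma tent_eq_sub {l m t : ℝ} (h₀ : 0 ≤ m - t) (h₁ : m - t ≤ l * t) : tent l m t = m - t := by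
  rw [tent, min_eq_right h₁, max_eq_right h₀]

lemma tent_eq_zero {l m t : ℝ} (h : m ≤ t) : tent l m t = 0 :=
  max_eq_left ((min_le_right _ _).trans (sub_nonpos.2 h))

lemma memF_tent {l m : ℝ} (hl : 0 ≤ l) (hm : m ≤ 1) : MemF (tent l m) := by
  have add_self : ∀ t, tent l m t + t = max t (min (l * t + t) m) := fun t => by
    rw [tent, ← max_add_add_right, ← min_add_add_right, zero_add, sub_add_cancel]
  refine ⟨fun t ht => ⟨le_max_left _ _, max_le zero_le_one ?_⟩, ?_, ?_, ?_, ?_⟩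
  · exact (min_le_right _ _).trans (by linarith [ht.1])
  · exact max_eq_left ((min_le_left _ _).trans (by simp))
  · exact tent_eq_zero hm
  · intro s _ t _ hst
    simp only [add_self]
    exact max_le_max hst (min_le_min (by nlinarith) le_rfl)
  · intro s hs t ht hst
    simp only
    rw [div_le_div_iff₀ ht.1 hs.1]
    rcases le_or_gt (min (l * t) (m - t)) 0 with h | h
    · rw [tent, max_eq_left h, zero_mul]
      exact mul_nonneg (le_max_left 0 _) ht.1.le
    · have hms : 0 < m - s := by linarith [min_le_right (l * t) (m - t)]
      rw [tent, tent, max_eq_right h.le, max_eq_right (le_min (mul_nonneg hl hs.1.le) hms.le),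
        min_mul_of_nonneg _ _ hs.1.le, min_mul_of_nonneg _ _ ht.1.le]
      refine min_le_min (le_of_eq (by ring)) ?_
      have hm : 0 ≤ m := by linarith [min_le_right (l * t) (m - t), ht.1]
      nlinarith [mul_nonneg hm (sub_nonneg.2 hst)]

lemma memF_zero : MemF 0 :=
  ⟨fun _ _ => ⟨le_rfl, zero_le_one⟩, rfl, rfl, fun _ _ _ _ h => by simpa using h,
    fun _ _ _ _ _ => by simp⟩

namespace MemF

variable {f : ℝ → ℝ} {x y : ℝ}

lemma nonneg (hf : MemF f) (hx : 0 ≤ x) (hx₁ : x ≤ 1) : 0 ≤ f x := (hf.1 x ⟨hx, hx₁⟩).1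

lemma le_one_sub (hf : MemF f) (hx : 0 ≤ x) (hx₁ : x ≤ 1) : f x ≤ 1 - x := by
  have := hf.2.2.2.1 ⟨hx, hx₁⟩ ⟨zero_le_one, le_rfl⟩ hx₁
  simp only [hf.2.2.1] at this
  linarith

lemma apply_add_le_apply_add (hf : MemF f) (hx : 0 ≤ x) (hxy : x ≤ y) (hy : y ≤ 1) :
    f x + x ≤ f y + y :=
  hf.2.2.2.1 ⟨hx, hxy.trans hy⟩ ⟨hx.trans hxy, hy⟩ hxy

lemma apply_mul_le_apply_mul (hf : MemF f) (hx : 0 ≤ x) (hxy : x ≤ y) (hy : y ≤ 1) :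
    f y * x ≤ f x * y := by
  rcases hx.eq_or_lt with rfl | hx
  · simp [hf.2.1]
  have hy₀ := hx.trans_le hxy
  exact (div_le_div_iff₀ hy₀ hx).1 (hf.2.2.2.2 ⟨hx, hxy.trans hy⟩ ⟨hy₀, hy⟩ hxy)

end MemF

lemma Fbound_nonneg {u v : ℝ} (hu : 0 ≤ u) (huv : u ≤ v) (hv : v ≤ 1) : 0 ≤ Fbound u v := by
  unfold Fbound
  split_ifs
  · exact mul_nonneg hu (by linarith)
  · exact div_nonneg (mul_nonneg hu (by linarith)) (by linarith)

lemma Fbound_le {u v : ℝ} (hu : 0 ≤ u) (huv : u ≤ v) (hv : v ≤ 1) : Fbound u v ≤ 4 / 27 := by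
  -- `4/27 - v²(1 - v) = (v - 2/3)²(v + 1/3)`
  have hcubic : v ^ 2 * (1 - v) ≤ 4 / 27 := by
    nlinarith [mul_nonneg (sq_nonneg (v - 2 / 3)) (by linarith : 0 ≤ v + 1 / 3)]
  unfold Fbound
  split_ifs with hsq
  · nlinarith [mul_le_mul_of_nonneg_right hsq (by linarith : 0 ≤ 1 - v)]
  rw [not_le] at hsq
  have hv₀ : 0 < v := by nlinarith
  rw [div_le_iff₀ hv₀]
  rcases le_total v (1 / 2) with hv₂ | hv₂
  · nlinarith [sq_nonneg (v - 2 * u)]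
  · -- on `[v², v]`, `u ↦ u(v - u)` is maximal at `u = v²` because `v² ≥ v/2`
    nlinarith [mul_nonneg (sub_nonneg.2 hsq.le) (by nlinarith : 0 ≤ u + v ^ 2 - v),
      mul_le_mul_of_nonneg_left hcubic hv₀.le]

lemma Fbound_eq_min {u v : ℝ} (hu : 0 ≤ u) (huv : u ≤ v) :
    Fbound u v = min (u * (1 - v)) (u * (v - u) / v) := by
  rcases (hu.trans huv).eq_or_lt with rfl | hv
  · obtain rfl : u = 0 := le_antisymm huv hu
    simp [Fbound]
  unfold Fbound
  split_ifs with hsq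
  · rw [min_eq_left (by rw [le_div_iff₀ hv]; nlinarith)]
  · rw [min_eq_right (by rw [div_le_iff₀ hv]; nlinarith)]

section

variable {x y : ℝ}

lemma max_Fbound_eq_of_le_sq_or (hx : 0 ≤ x) (hxy : x ≤ y) (hy : y ≤ 1)
    (h : x ≤ y ^ 2 ∨ 1 - y ≤ (1 - x) ^ 2) :
    max (Fbound x y) (Fbound (1 - y) (1 - x)) = x * (1 - y) := by
  have hle : Fbound x y ≤ x * (1 - y) := Fbound_eq_min hx hxy ▸ min_le_left _ _
  have hle' : Fbound (1 - y) (1 - x) ≤ x * (1 - y) := by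
    rw [Fbound_eq_min (sub_nonneg.2 hy) (by linarith), sub_sub_cancel, mul_comm]
    exact min_le_left _ _
  refine le_antisymm (max_le hle hle') ?_
  rcases h with h | h
  · exact le_max_of_le_left (by rw [Fbound, if_pos h])
  · exact le_max_of_le_right (by rw [Fbound, if_pos h, sub_sub_cancel, mul_comm])

lemma max_Fbound_eq_of_one_sub_le (hx : 0 ≤ x) (hxy : x ≤ y) (hy : y ≤ 1) (h : 1 - y ≤ x)
    (hsq : y ^ 2 ≤ x) : max (Fbound x y) (Fbound (1 - y) (1 - x)) = x / y * (y - x) := by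
  rw [Fbound_eq_min hx hxy, Fbound_eq_min (sub_nonneg.2 hy) (by linarith), sub_sub_cancel,
    sub_sub_sub_cancel_left, mul_comm (1 - y) x, ← min_max_distrib_left]
  have hy₀ : 0 < y := by linarith
  have hBA : x * (y - x) / y ≤ x * (1 - y) := by rw [div_le_iff₀ hy₀]; nlinarith
  -- `y (1 - y) - x (1 - x) = (y - x)(1 - x - y) ≤ 0`
  have hB'B : (1 - y) * (y - x) / (1 - x) ≤ x * (y - x) / y := by
    rcases (hxy.trans hy).lt_or_eq with hx₁ | rfl
    · rw [div_le_div_iff₀ (by linarith) hy₀]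
      nlinarith [mul_nonneg (mul_nonneg (sub_nonneg.2 hxy) (sub_nonneg.2 hxy))
        (by linarith : 0 ≤ x + y - 1)]
    · obtain rfl : y = 1 := le_antisymm hy hxy
      simp
  rw [max_eq_left hB'B, min_eq_right hBA]
  ring

lemma dstarMaxmin_eq (hx : 0 ≤ x) (hxy : x ≤ y) (hy : y ≤ 1) :
    dstarMaxmin x y = max (Fbound x y) (Fbound (1 - y) (1 - x)) := by
  unfold dstarMaxmin
  split_ifs with h₁ h₂
  · obtain ⟨h1y, hsq⟩ := max_le_iff.1 h₁
    exact (max_Fbound_eq_of_one_sub_le hx hxy hy h1y hsq).symm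
  · obtain ⟨hsq, hy1⟩ := le_min_iff.1 h₂
    have := max_Fbound_eq_of_one_sub_le (x := 1 - y) (y := 1 - x) (by linarith) (by linarith)
      (by linarith) (by linarith) (by nlinarith)
    rwa [sub_sub_cancel, sub_sub_cancel, sub_sub_sub_cancel_left, max_comm, eq_comm] at this
  · refine (max_Fbound_eq_of_le_sq_or hx hxy hy ?_).symm
    rw [not_le, lt_max_iff] at h₁
    rw [not_le, min_lt_iff] at h₂
    rcases h₁ with h₁ | h₁
    · rcases h₂ with h₂ | h₂
      · right; nlinarith
      · linarith
    · exact Or.inl h₁.le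

end

def maxmin (f g : ℝ → ℝ) (x y : ℝ) : ℝ := min x (x * y + f x * g (1 - y))

def maxminAsym (f g : ℝ → ℝ) (x y : ℝ) : ℝ :=
  min (x * (1 - y)) (f x * g (1 - y)) - f y * g (1 - x)

lemma isMaxminCopula_maxmin {f g : ℝ → ℝ} (hf : MemF f) (hg : MemF g) :
    IsMaxminCopula (maxmin f g) :=
  ⟨f, g, hf, hg, fun _ _ _ _ => rfl⟩

section

variable {f g : ℝ → ℝ} {x y : ℝ}

lemma maxmin_sub_maxmin (hf : MemF f) (hg : MemF g) (hx : 0 ≤ x) (hxy : x ≤ y) (hy : y ≤ 1) :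
    maxmin f g x y - maxmin f g y x = maxminAsym f g x y := by
  have hb := hf.le_one_sub (hx.trans hxy) hy
  have hd := hg.le_one_sub (sub_nonneg.2 (hxy.trans hy)) (by linarith)
  have hbd : f y * g (1 - x) ≤ (1 - y) * x :=
    mul_le_mul hb (by linarith) (hg.nonneg (by linarith) (by linarith)) (by linarith)
  have hyx : maxmin f g y x = y * x + f y * g (1 - x) :=
    min_eq_right (by nlinarith)
  have hxy' : maxmin f g x y = x * y + min (x * (1 - y)) (f x * g (1 - y)) := by
    rw [← min_add_add_left, mul_one_sub, add_sub_cancel, maxmin]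
  rw [hyx, hxy', maxminAsym]
  ring

lemma maxminAsym_dual (f g : ℝ → ℝ) (x y : ℝ) :
    maxminAsym g f (1 - y) (1 - x) = maxminAsym f g x y := by
  rw [maxminAsym, maxminAsym, sub_sub_cancel, sub_sub_cancel, mul_comm (1 - y) x,
    mul_comm (g _) (f x), mul_comm (g (1 - x))]

lemma maxminAsym_le_Fbound (hf : MemF f) (hg : MemF g) (hx : 0 ≤ x) (hxy : x ≤ y)
    (hy : y ≤ 1) (h : 1 - y ≤ x) : maxminAsym f g x y ≤ Fbound x y := by
  have ha₁ := hf.le_one_sub hx (hxy.trans hy)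
  have hb := hf.nonneg (hx.trans hxy) hy
  have hc := hg.nonneg (sub_nonneg.2 hy) (by linarith)
  have hc₁ := hg.le_one_sub (sub_nonneg.2 hy) (by linarith)
  have hd := hg.nonneg (sub_nonneg.2 (hxy.trans hy)) (by linarith)
  have hab := hf.apply_add_le_apply_add hx hxy hy
  have hcd := hg.apply_add_le_apply_add (sub_nonneg.2 hy) (by linarith : 1 - y ≤ 1 - x)
    (by linarith)
  rw [maxminAsym]
  set m := min (x * (1 - y)) (f x * g (1 - y))
  have hmA : m ≤ x * (1 - y) := min_le_left _ _
  have hmac : m ≤ f x * g (1 - y) := min_le_right _ _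
  unfold Fbound
  split_ifs with hsq
  · nlinarith [mul_nonneg hb hd]
  rw [not_le] at hsq
  have hy₀ : 0 < y := by nlinarith
  rw [le_div_iff₀ hy₀]
  by_cases hsmall : f x ≤ y - x ∨ g (1 - y) ≤ y - x
  · have hac : f x * g (1 - y) ≤ (y - x) * y := by
      rcases hsmall with hs | hs
      · exact mul_le_mul hs (by linarith) hc (by linarith)
      · nlinarith [mul_le_mul (by linarith : f x ≤ y) hs hc hy₀.le]
    nlinarith [mul_nonneg hb hd, mul_le_mul_of_nonneg_left hsq.le (sub_nonneg.2 hxy)]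
  simp only [not_or, not_le] at hsmall
  -- With `a = f x`, `c = g (1 - y)`, `s = y - x`: `y m ≤ s x (1 - y) + x a c` as `y = s + x`,
  -- `f y * g (1 - x) ≥ (a - s) (c - s)`, and `x a c - y (a - s) (c - s) = -s (y - a) (y - c) ≤ 0`.
  have hbd : (f x - (y - x)) * (g (1 - y) - (y - x)) ≤ f y * g (1 - x) :=
    mul_le_mul (by linarith) (by linarith) (by linarith) hb
  nlinarith [mul_le_mul_of_nonneg_left hbd hy₀.le,
    mul_le_mul_of_nonneg_left hmA (sub_nonneg.2 hxy), mul_le_mul_of_nonneg_left hmac hx,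
    mul_nonneg (sub_nonneg.2 hxy)
      (mul_nonneg (by linarith : 0 ≤ y - f x) (by linarith : 0 ≤ y - g (1 - y))),
    mul_nonneg (sub_nonneg.2 hxy) (mul_nonneg hx (by linarith : 0 ≤ y))]

lemma neg_maxminAsym_le_Fbound (hf : MemF f) (hg : MemF g) (hx : 0 ≤ x) (hxy : x ≤ y)
    (hy : y ≤ 1) : -maxminAsym f g x y ≤ Fbound x y := by
  have ha := hf.nonneg hx (hxy.trans hy)
  have hb := hf.nonneg (hx.trans hxy) hy
  have hb₁ := hf.le_one_sub (hx.trans hxy) hy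
  have hc := hg.nonneg (sub_nonneg.2 hy) (by linarith)
  have hd := hg.nonneg (sub_nonneg.2 (hxy.trans hy)) (by linarith)
  have hd₁ := hg.le_one_sub (sub_nonneg.2 (hxy.trans hy)) (by linarith)
  rw [sub_sub_cancel] at hd₁
  have hba := hf.apply_mul_le_apply_mul hx hxy hy
  have hdc := hg.apply_mul_le_apply_mul (sub_nonneg.2 hy) (by linarith : 1 - y ≤ 1 - x)
    (by linarith)
  have hbd : f y * g (1 - x) ≤ x * (1 - y) := by nlinarith [mul_le_mul hb₁ hd₁ hd (by linarith)]
  have hm : 0 ≤ min (x * (1 - y)) (f x * g (1 - y)) :=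
    le_min (mul_nonneg hx (by linarith)) (mul_nonneg ha hc)
  have hscaled : -maxminAsym f g x y * (y * (1 - x)) ≤ x * (1 - y) * (y - x) := by
    rw [maxminAsym, neg_sub]
    rcases le_total (f x * g (1 - y)) (x * (1 - y)) with h | h
    · rw [min_eq_right h]
      have hprod := mul_le_mul hba hdc (mul_nonneg hd (by linarith)) (mul_nonneg ha (by linarith))
      nlinarith [mul_le_mul_of_nonneg_right hbd (sub_nonneg.2 hxy)]
    · rw [min_eq_left h]
      nlinarith [mul_nonneg (hx.trans hxy) (by linarith : 0 ≤ 1 - x),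
        mul_nonneg (mul_nonneg hx (by linarith : 0 ≤ 1 - y)) (sub_nonneg.2 hxy)]
  have hle : -maxminAsym f g x y ≤ x * (1 - y) := by rw [maxminAsym]; linarith
  unfold Fbound
  split_ifs with hsq
  · exact hle
  rw [not_le] at hsq
  have hy₀ : 0 < y := by nlinarith
  rw [le_div_iff₀ hy₀]
  rcases (hxy.trans hy).lt_or_eq with hx₁ | rfl
  · have : -maxminAsym f g x y * y * (1 - x) ≤ x * (y - x) * (1 - x) := by
      nlinarith [mul_le_mul_of_nonneg_left (by linarith : 1 - y ≤ 1 - x)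
        (mul_nonneg hx (sub_nonneg.2 hxy))]
    exact le_of_mul_le_mul_right this (by linarith)
  · obtain rfl : y = 1 := le_antisymm hy hxy
    nlinarith

lemma abs_maxminAsym_le (hf : MemF f) (hg : MemF g) (hx : 0 ≤ x) (hxy : x ≤ y) (hy : y ≤ 1) :
    |maxminAsym f g x y| ≤ max (Fbound x y) (Fbound (1 - y) (1 - x)) := by
  refine abs_le'.2 ⟨?_, le_max_of_le_left (neg_maxminAsym_le_Fbound hf hg hx hxy hy)⟩
  rcases le_total (1 - y) x with h | h
  · exact le_max_of_le_left (maxminAsym_le_Fbound hf hg hx hxy hy h)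
  · have := maxminAsym_le_Fbound (x := 1 - y) (y := 1 - x) hg hf (sub_nonneg.2 hy)
      (by linarith) (by linarith) (by rwa [sub_sub_cancel])
    rw [maxminAsym_dual] at this
    exact le_max_of_le_right this

lemma maxminAsym_tent (hx : 0 ≤ x) (hxy : x ≤ y) (hy₀ : 0 < y) (hy₁ : y < 1) :
    maxminAsym (tent ((1 - y) / y) (x / y)) (tent (y / (1 - y)) 1) x y = Fbound x y := by
  have h1y : 0 < 1 - y := by linarith
  have hfx : tent ((1 - y) / y) (x / y) x = x / y - x := by
    refine tent_eq_sub ?_ (le_of_eq (by field_simp))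
    rw [sub_nonneg, le_div_iff₀ hy₀]; nlinarith
  have hgy : tent (y / (1 - y)) 1 (1 - y) = y := by
    rw [tent_eq_sub (by linarith) (le_of_eq (by field_simp; ring))]; ring
  have hgx : tent (y / (1 - y)) 1 (1 - x) = x := by
    rw [tent_eq_sub (by linarith) (by rw [div_mul_eq_mul_div, le_div_iff₀ h1y]; nlinarith)]; ring
  have hA : min (x * (1 - y)) ((x / y - x) * y) = x * (1 - y) := by
    rw [min_eq_left (le_of_eq (by field_simp))]
  rw [maxminAsym, hfx, hgy, hgx, hA, Fbound]
  split_ifs with hsq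
  · rw [tent_eq_zero (by rw [div_le_iff₀ hy₀]; nlinarith), zero_mul, sub_zero]
  · rw [not_le] at hsq
    rw [tent_eq_sub (by rw [sub_nonneg, le_div_iff₀ hy₀]; nlinarith)
      (by rw [div_mul_cancel₀ _ hy₀.ne', sub_le_sub_iff_right, div_le_one hy₀]; exact hxy)]
    field_simp
    ring

lemma exists_abs_maxminAsym_eq (hx : 0 ≤ x) (hxy : x ≤ y) (hy : y ≤ 1) :
    ∃ f g, MemF f ∧ MemF g ∧
      |maxminAsym f g x y| = max (Fbound x y) (Fbound (1 - y) (1 - x)) := by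
  by_cases hdeg : x = 0 ∨ y = 1
  · refine ⟨0, 0, memF_zero, memF_zero, ?_⟩
    rcases hdeg with rfl | rfl <;> simp [maxminAsym, Fbound, hxy]
  rw [not_or] at hdeg
  have hx₀ : 0 < x := hx.lt_of_ne' hdeg.1
  have hy₁ : y < 1 := hy.lt_of_ne hdeg.2
  rcases max_choice (Fbound x y) (Fbound (1 - y) (1 - x)) with h | h <;> rw [h]
  · refine ⟨tent ((1 - y) / y) (x / y), tent (y / (1 - y)) 1,
      memF_tent (div_nonneg (by linarith) (by linarith)) (div_le_one_of_le₀ hxy (by linarith)),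
      memF_tent (div_nonneg (by linarith) (by linarith)) le_rfl, ?_⟩
    rw [maxminAsym_tent hx hxy (by linarith) hy₁, abs_of_nonneg (Fbound_nonneg hx hxy hy)]
  · refine ⟨tent ((1 - x) / x) 1, tent (x / (1 - x)) ((1 - y) / (1 - x)),
      memF_tent (div_nonneg (by linarith) (by linarith)) le_rfl,
      memF_tent (div_nonneg (by linarith) (by linarith))
        (div_le_one_of_le₀ (by linarith) (by linarith)), ?_⟩
    have hdual := maxminAsym_tent (x := 1 - y) (y := 1 - x) (by linarith) (by linarith)
      (by linarith) (by linarith)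
    rw [sub_sub_cancel] at hdual
    rw [← maxminAsym_dual, hdual,
      abs_of_nonneg (Fbound_nonneg (by linarith) (by linarith) (by linarith))]

lemma IsMaxminCopula.abs_sub_le {C : ℝ → ℝ → ℝ} (hC : IsMaxminCopula C) (hx : 0 ≤ x)
    (hxy : x ≤ y) (hy : y ≤ 1) :
    |C x y - C y x| ≤ max (Fbound x y) (Fbound (1 - y) (1 - x)) := by
  obtain ⟨f, g, hf, hg, hC⟩ := hC
  have hxI : x ∈ Set.Icc (0 : ℝ) 1 := ⟨hx, hxy.trans hy⟩
  have hyI : y ∈ Set.Icc (0 : ℝ) 1 := ⟨hx.trans hxy, hy⟩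
  rw [hC x hxI y hyI, hC y hyI x hxI]
  exact maxmin_sub_maxmin hf hg hx hxy hy ▸ abs_maxminAsym_le hf hg hx hxy hy

lemma isGreatest_maxminCopula_abs_sub (hx : 0 ≤ x) (hxy : x ≤ y) (hy : y ≤ 1) :
    IsGreatest {d : ℝ | ∃ C : ℝ → ℝ → ℝ, IsMaxminCopula C ∧ d = |C x y - C y x|}
      (max (Fbound x y) (Fbound (1 - y) (1 - x))) := by
  obtain ⟨f, g, hf, hg, h⟩ := exists_abs_maxminAsym_eq hx hxy hy
  refine ⟨⟨maxmin f g, isMaxminCopula_maxmin hf hg, ?_⟩, ?_⟩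
  · rw [maxmin_sub_maxmin hf hg hx hxy hy, h]
  · rintro _ ⟨C, hC, rfl⟩
    exact hC.abs_sub_le hx hxy hy

end

/-- Theorem 5.7: every maxmin copula satisfies `|C(x,y) − C(y,x)| ≤ 4/27`,
the bound is sharp, and for `x ≤ y` in `[0,1]` the maximal asymmetry function of the
family of maxmin copulas equals `max{F(x,y), F(1−y,1−x)}`, given explicitly by
`dstarMaxmin`; for `x ≥ y` the supremum equals the value at `(y,x)`. -/
theorem maxmin_maximal_asymmetry :
    (∀ C : ℝ → ℝ → ℝ, IsMaxminCopula C →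
      ∀ x ∈ Set.Icc (0:ℝ) 1, ∀ y ∈ Set.Icc (0:ℝ) 1, |C x y - C y x| ≤ 4 / 27) ∧
    (∃ C : ℝ → ℝ → ℝ, IsMaxminCopula C ∧
      ∃ x ∈ Set.Icc (0:ℝ) 1, ∃ y ∈ Set.Icc (0:ℝ) 1, |C x y - C y x| = 4 / 27) ∧
    (∀ x ∈ Set.Icc (0:ℝ) 1, ∀ y ∈ Set.Icc (0:ℝ) 1, x ≤ y →
      IsLUB {d : ℝ | ∃ C : ℝ → ℝ → ℝ, IsMaxminCopula C ∧ d = |C x y - C y x|}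
        (dstarMaxmin x y) ∧
      dstarMaxmin x y = max (Fbound x y) (Fbound (1 - y) (1 - x))) ∧
    (∀ x ∈ Set.Icc (0:ℝ) 1, ∀ y ∈ Set.Icc (0:ℝ) 1, y ≤ x →
      IsLUB {d : ℝ | ∃ C : ℝ → ℝ → ℝ, IsMaxminCopula C ∧ d = |C x y - C y x|}
        (dstarMaxmin y x)) := by
  refine ⟨fun C hC x hx y hy => ?_, ?_, fun x hx y hy hxy => ?_, fun x hx y hy hyx => ?_⟩
  · wlog hxy : x ≤ y generalizing x y
    · rw [abs_sub_comm]
      exact this y hy x hx (le_of_not_ge hxy)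
    exact (hC.abs_sub_le hx.1 hxy hy.2).trans <| max_le (Fbound_le hx.1 hxy hy.2)
      (Fbound_le (by linarith [hy.2]) (by linarith) (by linarith [hx.1]))
  · obtain ⟨⟨C, hC, hd⟩, -⟩ :=
      isGreatest_maxminCopula_abs_sub (x := 4 / 9) (y := 2 / 3) (by norm_num) (by norm_num) (by norm_num)
    refine ⟨C, hC, 4 / 9, by norm_num, 2 / 3, by norm_num, ?_⟩
    rw [← hd]
    norm_num [Fbound]
  · rw [dstarMaxmin_eq hx.1 hxy hy.2]
    exact ⟨(isGreatest_maxminCopula_abs_sub hx.1 hxy hy.2).isLUB, rfl⟩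
  · rw [dstarMaxmin_eq hy.1 hyx hx.2]
    simpa only [abs_sub_comm] using (isGreatest_maxminCopula_abs_sub hy.1 hyx hx.2).isLUB
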